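/- Let κ, λ, θ > 0 with 4κλ > θ², let x ≥ 0, w ∈ ℝ and h > 0. Set s = √x + (θ/2)w, let a = ( s/(2 + κh) + √( s²/(2 + κh)² + ((κλ − θ²/4)h)/(2 + κh) ) )² and v = (1/(1 + κh)) · ( s² + (κλ − θ²/4)h ). Then a > 0 and a = v − (h²/(1 + κh)) · ( (4κλ − θ²)/(8√a) − (κ/2)√a )². -/
import Mathlib


noncomputable section

/-- One step of the drift-implicit square-root Euler scheme for the CIR process with
parameters `κ, λ, θ`, started at `x ≥ 0`, with time step `h` and Brownian increment `w`. -/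
def aStep (κ lam θ x w h : ℝ) : ℝ :=
  ((Real.sqrt x + (θ / 2) * w) / (2 + κ * h)
    + Real.sqrt
        ((Real.sqrt x + (θ / 2) * w) ^ 2 / (2 + κ * h) ^ 2
          + (κ * lam - θ ^ 2 / 4) * h / (2 + κ * h))) ^ 2

/-- One step of the drift-implicit Milstein scheme for the CIR process with the same data. -/
def vStep (κ lam θ x w h : ℝ) : ℝ :=
  (1 / (1 + κ * h)) * ((Real.sqrt x + (θ / 2) * w) ^ 2 + (κ * lam - θ ^ 2 / 4) * h)

/-- for `κ, λ, θ > 0` with `4κλ > θ²`, `x ≥ 0`, `w ∈ ℝ`, `h > 0`, the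
square-root Euler step `a` is positive and satisfies
`a = v - (h²/(1+κh)) ((4κλ-θ²)/(8√a) - (κ/2)√a)²`, where `v` is the Milstein step. -/
theorem statement11 (κ lam θ x w h : ℝ)
    (hκ : 0 < κ) (hlam : 0 < lam) (hθ : 0 < θ)
    (hF : θ ^ 2 < 4 * κ * lam) (hx : 0 ≤ x) (hh : 0 < h) :
    0 < aStep κ lam θ x w h ∧
      aStep κ lam θ x w h
        = vStep κ lam θ x w h
          - (h ^ 2 / (1 + κ * h)) *
              ((4 * κ * lam - θ ^ 2) / (8 * Real.sqrt (aStep κ lam θ x w h))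
                - (κ / 2) * Real.sqrt (aStep κ lam θ x w h)) ^ 2 := by
  have hc : (0:ℝ) < 2 + κ * h := by positivity
  have hc' : (0:ℝ) < 1 + κ * h := by positivity
  set s : ℝ := Real.sqrt x + (θ / 2) * w with hsdef
  have hd : 0 < (κ * lam - θ ^ 2 / 4) * h := by
    have : 0 < κ * lam - θ ^ 2 / 4 := by nlinarith
    exact mul_pos this hh
  set d : ℝ := (κ * lam - θ ^ 2 / 4) * h with hddef
  set t : ℝ := Real.sqrt (s ^ 2 / (2 + κ * h) ^ 2 + d / (2 + κ * h)) with htdef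
  have harg : 0 < s ^ 2 / (2 + κ * h) ^ 2 + d / (2 + κ * h) := by positivity
  have htpos : 0 < t := Real.sqrt_pos.mpr harg
  have ht2 : t ^ 2 = s ^ 2 / (2 + κ * h) ^ 2 + d / (2 + κ * h) :=
    Real.sq_sqrt harg.le
  set r : ℝ := s / (2 + κ * h) + t with hrdef
  have hts : |s| / (2 + κ * h) < t := by
    have h1 : (|s| / (2 + κ * h)) ^ 2 < t ^ 2 := by
      rw [ht2, div_pow, sq_abs]
      have : 0 < d / (2 + κ * h) := div_pos hd hc
      linarith
    nlinarith [abs_nonneg s, div_nonneg (abs_nonneg s) hc.le]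
  have hrpos : 0 < r := by
    have h3 : -s ≤ |s| := neg_le_abs s
    have h4 : -s / (2 + κ * h) ≤ |s| / (2 + κ * h) := by gcongr
    rw [neg_div] at h4
    rw [hrdef]
    linarith
  have ha : aStep κ lam θ x w h = r ^ 2 := rfl
  have hsq : Real.sqrt (aStep κ lam θ x w h) = r := by
    rw [ha, Real.sqrt_sq hrpos.le]
  -- key algebraic relation
  have hcr : (2 + κ * h) * r = s + (2 + κ * h) * t := by
    rw [hrdef]; field_simp
  have ht2' : (2 + κ * h) ^ 2 * t ^ 2 = s ^ 2 + d * (2 + κ * h) := by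
    rw [ht2]; field_simp
  have h9 : (2 + κ * h) ^ 2 * r ^ 2 = 2 * s * ((2 + κ * h) * r) + d * (2 + κ * h) := by
    linear_combination ((2 + κ * h) * r - s + (2 + κ * h) * t) * hcr + ht2'
  have hR : (2 + κ * h) * r ^ 2 = 2 * r * s + d := by
    have h10 : (2 + κ * h) * ((2 + κ * h) * r ^ 2) = (2 + κ * h) * (2 * r * s + d) := by
      linear_combination h9
    exact mul_left_cancel₀ hc.ne' h10
  have hrne : r ≠ 0 := hrpos.ne'
  have hcne : (2 + κ * h) ≠ 0 := hc.ne'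
  have hcne' : (1 + κ * h) ≠ 0 := hc'.ne'
  have hhne : h ≠ 0 := hh.ne'
  constructor
  · rw [ha]; positivity
  · rw [hsq, ha]
    simp only [vStep]
    rw [← hsdef, ← hddef]
    have hs2 : s = ((2 + κ * h) * r ^ 2 - d) / (2 * r) := by
      rw [eq_div_iff (by positivity : (2:ℝ) * r ≠ 0)]
      linarith [hR]
    have hDd : 4 * κ * lam - θ ^ 2 = 4 * d / h := by
      rw [hddef]; field_simp
    rw [hs2, hDd]
    field_simp
    ring
end
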